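/- arXiv:2104.14510 — 4 statements merged into one kernel-verified Lean document; each statement's English description precedes it below -/
import Mathlib

section
/- Let G be a simple graph and v a simplicial vertex of G with d(N[v]) ≤ d(v), where d(U) counts edges between U and its complement. Then the minimum size of a strong triadic closure solution of G equals the minimum size of a strong triadic closure solution of G − N[v] plus d(N[v]). -/
open scoped Classical

def IsClusterGraph {W : Type*} (H : SimpleGraph W) : Prop :=
  ∀ ⦃u v w : W⦄, H.Adj u v → H.Adj v w → u ≠ w → H.Adj u w

def closedNbhd {W : Type*} (G : SimpleGraph W) (v : W) : Set W :=
  insert v (G.neighborSet v)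

noncomputable def cut {W : Type*} (G : SimpleGraph W) (U : Set W) : ℕ :=
  {e ∈ G.edgeSet | ∃ a ∈ U, ∃ b ∉ U, e = s(a, b)}.ncard

noncomputable def clusterDelNum {W : Type*} (G : SimpleGraph W) : ℕ :=
  sInf {n | ∃ E ⊆ G.edgeSet, E.ncard = n ∧ IsClusterGraph (G.deleteEdges E)}

def IsSTCSolution {W : Type*} (G : SimpleGraph W) (E : Set (Sym2 W)) : Prop :=
  E ⊆ G.edgeSet ∧
    ∀ ⦃u w x : W⦄, (G.deleteEdges E).Adj u w → (G.deleteEdges E).Adj w x → u ≠ x →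
      ¬(G.deleteEdges E).Adj u x → G.Adj u x

noncomputable def stcNum {W : Type*} (G : SimpleGraph W) : ℕ :=
  sInf {n | ∃ E : Set (Sym2 W), IsSTCSolution G E ∧ E.ncard = n}

def P4At {W : Type*} (H : SimpleGraph W) (a b c d : W) : Prop :=
  a ≠ b ∧ a ≠ c ∧ a ≠ d ∧ b ≠ c ∧ b ≠ d ∧ c ≠ d ∧
    H.Adj a b ∧ H.Adj b c ∧ H.Adj c d ∧ ¬H.Adj a c ∧ ¬H.Adj b d ∧ ¬H.Adj a d

def C4At {W : Type*} (H : SimpleGraph W) (a b c d : W) : Prop :=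
  a ≠ b ∧ a ≠ c ∧ a ≠ d ∧ b ≠ c ∧ b ≠ d ∧ c ≠ d ∧
    H.Adj a b ∧ H.Adj b c ∧ H.Adj c d ∧ H.Adj d a ∧ ¬H.Adj a c ∧ ¬H.Adj b d

def TwoK2At {W : Type*} (H : SimpleGraph W) (a b c d : W) : Prop :=
  a ≠ b ∧ a ≠ c ∧ a ≠ d ∧ b ≠ c ∧ b ≠ d ∧ c ≠ d ∧
    H.Adj a b ∧ H.Adj c d ∧ ¬H.Adj a c ∧ ¬H.Adj a d ∧ ¬H.Adj b c ∧ ¬H.Adj b d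

def C5At {W : Type*} (H : SimpleGraph W) (a b c d e : W) : Prop :=
  a ≠ b ∧ a ≠ c ∧ a ≠ d ∧ a ≠ e ∧ b ≠ c ∧ b ≠ d ∧ b ≠ e ∧ c ≠ d ∧ c ≠ e ∧ d ≠ e ∧
    H.Adj a b ∧ H.Adj b c ∧ H.Adj c d ∧ H.Adj d e ∧ H.Adj e a ∧
    ¬H.Adj a c ∧ ¬H.Adj a d ∧ ¬H.Adj b d ∧ ¬H.Adj b e ∧ ¬H.Adj c e

def IsTriviallyPerfect {W : Type*} (H : SimpleGraph W) : Prop :=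
  (¬∃ a b c d, P4At H a b c d) ∧ (¬∃ a b c d, C4At H a b c d)

def IsIndep {W : Type*} (H : SimpleGraph W) (s : Set W) : Prop :=
  s.Pairwise fun a b => ¬H.Adj a b

def IsSplit {W : Type*} (H : SimpleGraph W) : Prop :=
  ∃ C : Set W, H.IsClique C ∧ IsIndep H Cᶜ

def IsPseudoSplit {W : Type*} (H : SimpleGraph W) : Prop :=
  (¬∃ a b c d, TwoK2At H a b c d) ∧ (¬∃ a b c d, C4At H a b c d)

noncomputable def sedNum {W : Type*} (G : SimpleGraph W) : ℕ :=
  sInf {n | ∃ E ⊆ G.edgeSet, E.ncard = n ∧ IsSplit (G.deleteEdges E)}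

noncomputable def psdNum {W : Type*} (G : SimpleGraph W) : ℕ :=
  sInf {n | ∃ E ⊆ G.edgeSet, E.ncard = n ∧ IsPseudoSplit (G.deleteEdges E)}

def IsTPCompletion {W : Type*} (G Gh : SimpleGraph W) : Prop :=
  G ≤ Gh ∧ IsTriviallyPerfect Gh

def IsMinimalTPCompletion {W : Type*} (G Gh : SimpleGraph W) : Prop :=
  IsTPCompletion G Gh ∧
    ∀ G' : SimpleGraph W, G ≤ G' → G' ≤ Gh → IsTriviallyPerfect G' → G' = Gh

noncomputable def tpcNum {W : Type*} (G : SimpleGraph W) : ℕ :=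
  sInf {n | ∃ Gh : SimpleGraph W, IsTPCompletion G Gh ∧ (Gh.edgeSet \ G.edgeSet).ncard = n}

def IsMinTPCompletion {W : Type*} (G Gh : SimpleGraph W) : Prop :=
  IsTPCompletion G Gh ∧
    ∀ G' : SimpleGraph W, IsTPCompletion G G' →
      (Gh.edgeSet \ G.edgeSet).ncard ≤ (G'.edgeSet \ G.edgeSet).ncard

def IsModule {W : Type*} (G : SimpleGraph W) (M : Set W) : Prop :=
  ∀ a ∈ M, ∀ b ∈ M, ∀ x ∉ M, (G.Adj a x ↔ G.Adj b x)

/-! Deleting the d(N[v]) edges that leave the clique N[v], together with an optimal solution of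
G − N[v], solves G: a path that keeps its edges either stays inside the clique N[v] or avoids it.
Conversely, let E be a solution and u ∉ N[v] have a strong edge uw into N[v]. For every
non-neighbour w' ∈ N[v] of u (there is one: v) the clique edge ww' lies in E, otherwise u–w–w'
is an open strong path. If u has s strong edges into N[v] and b non-neighbours there, this gives
s·b edges of E inside N[v], while d(N[v]) ≤ d(v) = |N[v]| − 1 bounds the strong edges leaving
N[v] by s + b − 1 ≤ s·b. Hence E has at least d(N[v]) edges meeting N[v]. -/

open Set

section

variable {V : Type*} {G : SimpleGraph V} {C U : Set V} {E : Set (Sym2 V)} {v : V}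

def cutEdges (G : SimpleGraph V) (U : Set V) : Set (Sym2 V) :=
  {e ∈ G.edgeSet | ∃ a ∈ U, ∃ b ∉ U, e = s(a, b)}

theorem cut_eq_ncard_cutEdges : cut G U = (cutEdges G U).ncard := rfl

theorem mk_mem_cutEdges {a b : V} (h : G.Adj a b) (ha : a ∈ U) (hb : b ∉ U) :
    s(a, b) ∈ cutEdges G U :=
  ⟨h, a, ha, b, hb, rfl⟩

theorem disjoint_cutEdges_sym2 : Disjoint (cutEdges G U) U.sym2 := by
  rw [Set.disjoint_left]
  rintro _ ⟨-, a, -, b, hb, rfl⟩ hab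
  exact hb hab.2

theorem disjoint_cutEdges_compl_sym2 : Disjoint (cutEdges G U) Uᶜ.sym2 := by
  rw [Set.disjoint_left]
  rintro _ ⟨-, a, ha, b, -, rfl⟩ hab
  exact hab.1 ha

theorem cut_singleton (G : SimpleGraph V) (v : V) : cut G {v} = (G.neighborSet v).ncard := by
  have : cutEdges G {v} = Sym2.mkEmbedding v '' G.neighborSet v := by
    ext e
    constructor
    · rintro ⟨he, a, rfl, b, -, rfl⟩
      exact ⟨b, he, rfl⟩
    · rintro ⟨b, hb, rfl⟩
      exact mk_mem_cutEdges hb rfl hb.ne'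
  rw [cut_eq_ncard_cutEdges, this, ncard_image_of_injective _ (Sym2.mkEmbedding v).injective]

theorem mem_closedNbhd_self : v ∈ closedNbhd G v := mem_insert v _

theorem not_adj_of_notMem_closedNbhd {u : V} (hu : u ∉ closedNbhd G v) : ¬G.Adj u v :=
  fun h => hu (mem_insert_of_mem v h.symm)

theorem ncard_closedNbhd [Finite V] :
    (closedNbhd G v).ncard = (G.neighborSet v).ncard + 1 :=
  ncard_insert_of_notMem G.notMem_neighborSet_self

theorem isSTCSolution_edgeSet (G : SimpleGraph V) : IsSTCSolution G G.edgeSet :=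
  ⟨subset_rfl, fun _ _ _ h => by simp at h⟩

theorem stcNum_le (hE : IsSTCSolution G E) : stcNum G ≤ E.ncard :=
  Nat.sInf_le ⟨E, hE, rfl⟩

theorem exists_isSTCSolution_ncard_eq_stcNum (G : SimpleGraph V) :
    ∃ E, IsSTCSolution G E ∧ E.ncard = stcNum G :=
  Nat.sInf_mem (s := {n | ∃ E, IsSTCSolution G E ∧ E.ncard = n})
    ⟨_, G.edgeSet, isSTCSolution_edgeSet G, rfl⟩

theorem induce_deleteEdges_adj_iff (s : Set V) (a b : s) :
    ((G.induce s).deleteEdges (Sym2.map (↑) ⁻¹' E)).Adj a b ↔ (G.deleteEdges E).Adj a b := by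
  simp

theorem IsSTCSolution.induce (s : Set V) (hE : IsSTCSolution G E) :
    IsSTCSolution (G.induce s) (Sym2.map (↑) ⁻¹' E) := by
  refine ⟨fun e he => ?_, fun u w x huw hwx hux hux' => ?_⟩
  · induction e using Sym2.ind with
    | _ a b => exact hE.1 he
  · rw [induce_deleteEdges_adj_iff] at huw hwx hux'
    exact hE.2 huw hwx (Subtype.coe_injective.ne hux) hux'

theorem ncard_preimage_sym2Map_val (s : Set V) (E : Set (Sym2 V)) :
    (Sym2.map ((↑) : s → V) ⁻¹' E).ncard = (E ∩ s.sym2).ncard := by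
  have hrange : range (Sym2.map ((↑) : s → V)) = s.sym2 := by
    rw [← image_univ, ← sym2_univ, ← sym2_image, image_univ, Subtype.range_coe]
  calc (Sym2.map ((↑) : s → V) ⁻¹' E).ncard
      = (Sym2.map ((↑) : s → V) ⁻¹' (E ∩ range (Sym2.map ((↑) : s → V)))).ncard := by
        rw [preimage_inter_range]
    _ = (E ∩ s.sym2).ncard := by
        rw [ncard_preimage_of_injective_subset_range (Sym2.map.injective Subtype.val_injective)
          inter_subset_right, hrange]

theorem mem_iff_mem_of_deleteEdges_adj {F : Set (Sym2 V)} (hF : cutEdges G C ⊆ F) {a b : V}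
    (h : (G.deleteEdges F).Adj a b) : a ∈ C ↔ b ∈ C := by
  rw [SimpleGraph.deleteEdges_adj] at h
  constructor
  · intro ha
    by_contra hb
    exact h.2 (hF (mk_mem_cutEdges h.1 ha hb))
  · intro hb
    by_contra ha
    exact h.2 (Sym2.eq_swap ▸ hF (mk_mem_cutEdges h.1.symm hb ha))

theorem IsSTCSolution.extend_of_isClique (hC : G.IsClique C) {E' : Set (Sym2 ↥Cᶜ)}
    (hE' : IsSTCSolution (G.induce Cᶜ) E') :
    IsSTCSolution G (Sym2.map (↑) '' E' ∪ cutEdges G C) := by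
  have hcut : cutEdges G C ⊆ Sym2.map (↑) '' E' ∪ cutEdges G C := subset_union_right
  refine ⟨union_subset ?_ fun _ he => he.1, fun u w x huw hwx hux hux' => ?_⟩
  · rintro _ ⟨e, he, rfl⟩
    induction e using Sym2.ind with
    | _ a b => exact hE'.1 he
  have huw' := mem_iff_mem_of_deleteEdges_adj hcut huw
  have hwx' := mem_iff_mem_of_deleteEdges_adj hcut hwx
  by_cases hw : w ∈ C
  · exact hC (huw'.2 hw) (hwx'.1 hw) hux
  have hu : u ∈ Cᶜ := mt huw'.1 hw
  have hx : x ∈ Cᶜ := mt hwx'.2 hw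
  have hlift : ∀ {a b : ↥Cᶜ}, (G.deleteEdges (Sym2.map (↑) '' E' ∪ cutEdges G C)).Adj a b →
      ((G.induce Cᶜ).deleteEdges E').Adj a b := by
    intro a b h
    rw [SimpleGraph.deleteEdges_adj] at h ⊢
    exact ⟨h.1, fun he => h.2 (Or.inl ⟨_, he, rfl⟩)⟩
  by_contra hG
  exact hG (hE'.2 (u := ⟨u, hu⟩) (w := ⟨w, hw⟩) (x := ⟨x, hx⟩) (hlift huw) (hlift hwx)
    (fun h => hux (congrArg Subtype.val h)) fun h => hG (SimpleGraph.deleteEdges_adj.1 h).1)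

theorem ncard_cutEdges_sdiff_le [Finite V] (hC : G.IsClique C) (hvC : v ∈ C)
    (hv : ∀ u ∉ C, ¬G.Adj u v) (hcut : cut G C < C.ncard) (hE : IsSTCSolution G E) :
    (cutEdges G C \ E).ncard ≤ (E ∩ C.sym2).ncard := by
  obtain hempty | ⟨_, ⟨hGe, w₀, hw₀, u, hu, rfl⟩, hw₀E⟩ := (cutEdges G C \ E).eq_empty_or_nonempty
  · simp [hempty]
  set S := {w ∈ C | G.Adj u w ∧ s(u, w) ∉ E}
  set N := C ∩ G.neighborSet u
  set B := C \ G.neighborSet u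
  have hS : 1 ≤ S.ncard :=
    (ncard_pos (toFinite _)).2 ⟨w₀, hw₀, G.adj_symm hGe, by rwa [Sym2.eq_swap]⟩
  have hB : 1 ≤ B.ncard := (ncard_pos (toFinite _)).2 ⟨v, hvC, hv u hu⟩
  have hNB : N.ncard + B.ncard = C.ncard := ncard_inter_add_ncard_sdiff_eq_ncard C _
  have hSB : S.ncard * B.ncard ≤ (E ∩ C.sym2).ncard := by
    rw [← ncard_prod]
    refine ncard_le_ncard_of_injOn (fun p => s(p.1, p.2)) ?_ ?_
    · rintro ⟨w, w'⟩ ⟨⟨hw, huw, huwE⟩, hw', huw'⟩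
      have hww' : w ≠ w' := by rintro rfl; exact huw' huw
      refine ⟨by_contra fun hww'E => huw' (hE.2 (w := w) ?_ ?_ ?_ ?_), hw, hw'⟩
      · exact SimpleGraph.deleteEdges_adj.2 ⟨huw, huwE⟩
      · exact SimpleGraph.deleteEdges_adj.2 ⟨hC hw hw' hww', hww'E⟩
      · rintro rfl; exact hu hw'
      · exact fun h => huw' (SimpleGraph.deleteEdges_adj.1 h).1
    · rintro ⟨w, w'⟩ ⟨⟨-, huw, -⟩, -⟩ ⟨x, x'⟩ ⟨-, -, hux'⟩ h
      rcases Sym2.eq_iff.1 h with ⟨rfl, rfl⟩ | ⟨rfl, -⟩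
      · rfl
      · exact absurd huw hux'
  have hstar : (cutEdges G C \ Sym2.mkEmbedding u '' N).ncard = cut G C - N.ncard := by
    rw [ncard_sdiff, ncard_image_of_injective _ (Sym2.mkEmbedding u).injective,
      cut_eq_ncard_cutEdges]
    rintro _ ⟨w, ⟨hw, huw⟩, rfl⟩
    rw [Sym2.mkEmbedding_apply, Sym2.eq_swap]
    exact mk_mem_cutEdges (G.adj_symm huw) hw hu
  have hcover : cutEdges G C \ E ⊆
      (cutEdges G C \ Sym2.mkEmbedding u '' N) ∪ Sym2.mkEmbedding u '' S := by
    rintro e ⟨he, heE⟩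
    by_cases hat : e ∈ Sym2.mkEmbedding u '' N
    · obtain ⟨w, ⟨hw, huw⟩, rfl⟩ := hat
      exact Or.inr ⟨w, ⟨hw, huw, heE⟩, rfl⟩
    · exact Or.inl ⟨he, hat⟩
  have hbound := (ncard_le_ncard hcover).trans (ncard_union_le _ _)
  rw [hstar, ncard_image_of_injective _ (Sym2.mkEmbedding u).injective] at hbound
  have hSB' : S.ncard + B.ncard ≤ S.ncard * B.ncard + 1 := by nlinarith
  omega

theorem cut_add_ncard_inter_compl_sym2_le [Finite V] (hC : G.IsClique C) (hvC : v ∈ C)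
    (hv : ∀ u ∉ C, ¬G.Adj u v) (hcut : cut G C < C.ncard) (hE : IsSTCSolution G E) :
    cut G C + (E ∩ Cᶜ.sym2).ncard ≤ E.ncard := by
  have hsym2 : Disjoint C.sym2 Cᶜ.sym2 := by
    rw [disjoint_iff_inter_eq_empty, ← sym2_inter, inter_compl_self, sym2_empty]
  have htouch : (E ∩ cutEdges G C).ncard + (E ∩ C.sym2).ncard ≤ (E \ Cᶜ.sym2).ncard := by
    rw [← ncard_union_eq (disjoint_cutEdges_sym2.mono inter_subset_right inter_subset_right)]
    refine ncard_le_ncard (union_subset ?_ ?_)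
    · exact fun e ⟨heE, he⟩ => ⟨heE, Set.disjoint_left.1 disjoint_cutEdges_compl_sym2 he⟩
    · exact fun e ⟨heE, he⟩ => ⟨heE, Set.disjoint_left.1 hsym2 he⟩
  have hsplit := ncard_inter_add_ncard_sdiff_eq_ncard E Cᶜ.sym2
  have hcutE := ncard_inter_add_ncard_sdiff_eq_ncard (cutEdges G C) E
  have hstrong := ncard_cutEdges_sdiff_le hC hvC hv hcut hE
  rw [inter_comm] at hcutE
  rw [cut_eq_ncard_cutEdges]
  omega

end

theorem stmt5 {V : Type*} [Fintype V] (G : SimpleGraph V) (v : V)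
    (hsimp : G.IsClique (closedNbhd G v))
    (hd : cut G (closedNbhd G v) ≤ cut G {v}) :
    stcNum G = stcNum (G.induce (closedNbhd G v)ᶜ) + cut G (closedNbhd G v) := by
  set C := closedNbhd G v
  have hcut : cut G C < C.ncard := by
    rw [ncard_closedNbhd, ← cut_singleton]
    omega
  apply le_antisymm
  · obtain ⟨E', hE', hcard⟩ := exists_isSTCSolution_ncard_eq_stcNum (G.induce Cᶜ)
    calc stcNum G ≤ (Sym2.map ((↑) : ↥Cᶜ → V) '' E' ∪ cutEdges G C).ncard :=
          stcNum_le (hE'.extend_of_isClique hsimp)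
      _ ≤ (Sym2.map ((↑) : ↥Cᶜ → V) '' E').ncard + (cutEdges G C).ncard := ncard_union_le _ _
      _ = _ := by
        rw [ncard_image_of_injective _ (Sym2.map.injective Subtype.val_injective), hcard,
          cut_eq_ncard_cutEdges]
  · obtain ⟨E, hE, hcard⟩ := exists_isSTCSolution_ncard_eq_stcNum G
    have hrestrict := stcNum_le (hE.induce Cᶜ)
    rw [ncard_preimage_sym2Map_val] at hrestrict
    have hcount := cut_add_ncard_inter_compl_sym2_le hsimp mem_closedNbhd_self
      (fun _ => not_adj_of_notMem_closedNbhd) hcut hE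
    omega
end

section
/- Let G be a simple graph, let Ĝ be a minimal trivially perfect completion of G (a trivially perfect supergraph on the same vertex set, minimal with respect to edge-set inclusion among such supergraphs), and let u, v be vertices with N_G[u] ⊆ N_G[v]. Then N_Ĝ[u] ⊆ N_Ĝ[v]. -/
open scoped Classical

/-!
Trivially perfect graphs are exactly the graphs in which the two ends of every edge have nested
closed neighbourhoods. Deleting from `Ĝ` the edges that join `u` to vertices outside `N_Ĝ[v]`
preserves this property, and keeps every edge of `G` because `N_G[u] ⊆ N_G[v] ⊆ N_Ĝ[v]`.
By minimality nothing is deleted, that is, `N_Ĝ[u] ⊆ N_Ĝ[v]`.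
-/

section

variable {V : Type*} {H : SimpleGraph V} {u v w x y z : V}

lemma mem_closedNbhd : y ∈ closedNbhd H x ↔ y = x ∨ H.Adj x y := Iff.rfl

lemma mem_closedNbhd_comm : y ∈ closedNbhd H x ↔ x ∈ closedNbhd H y := by
  simp only [mem_closedNbhd, eq_comm, H.adj_comm]

lemma closedNbhd_mono {G : SimpleGraph V} (hGH : G ≤ H) (x : V) :
    closedNbhd G x ⊆ closedNbhd H x :=
  Set.insert_subset_insert fun _ h => hGH h

/-- A witness `a ∈ N[x] \ N[y]`, `b ∈ N[y] \ N[x]` on an edge `xy` spans the path `a x y b`,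
which is an induced `P₄` or `C₄` according as `ab` is an edge. -/
theorem isTriviallyPerfect_iff_closedNbhd_nested :
    IsTriviallyPerfect H ↔ ∀ ⦃x y⦄, H.Adj x y →
      closedNbhd H x ⊆ closedNbhd H y ∨ closedNbhd H y ⊆ closedNbhd H x := by
  constructor
  · intro hTP x y hxy
    by_contra! hne
    obtain ⟨⟨a, hax, hay⟩, ⟨b, hby, hbx⟩⟩ := And.imp Set.not_subset.1 Set.not_subset.1 hne
    simp only [mem_closedNbhd, not_or] at hax hay hby hbx
    obtain ⟨hay, hya⟩ := hay
    obtain ⟨hbx, hxb⟩ := hbx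
    have hxa : H.Adj x a := hax.resolve_left fun h => hya (h ▸ hxy.symm)
    have hyb : H.Adj y b := hby.resolve_left fun h => hxb (h ▸ hxy)
    have hab : a ≠ b := fun h => hxb (h ▸ hxa)
    by_cases hba : H.Adj b a
    · exact hTP.2 ⟨a, x, y, b, hxa.ne', hay, hab, hxy.ne, Ne.symm hbx, hyb.ne, hxa.symm, hxy, hyb,
        hba, fun h => hya h.symm, hxb⟩
    · exact hTP.1 ⟨a, x, y, b, hxa.ne', hay, hab, hxy.ne, Ne.symm hbx, hyb.ne, hxa.symm, hxy, hyb,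
        fun h => hya h.symm, hxb, fun h => hba h.symm⟩
  · intro hnest
    refine ⟨?_, ?_⟩
    · rintro ⟨a, b, c, d, -, hac, -, -, hbd, hcd, hab, hbc, hcd', hac', hbd', -⟩
      rcases hnest hbc with h | h
      · exact (mem_closedNbhd.1 (h (Or.inr hab.symm))).elim hac fun h => hac' h.symm
      · exact (mem_closedNbhd.1 (h (Or.inr hcd'))).elim hbd.symm hbd'
    · rintro ⟨a, b, c, d, -, hac, -, -, hbd, -, hab, hbc, -, hda, hac', hbd'⟩
      rcases hnest hab with h | h
      · exact (mem_closedNbhd.1 (h (Or.inr hda.symm))).elim hbd.symm hbd'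
      · exact (mem_closedNbhd.1 (h (Or.inr hbc))).elim hac.symm hac'

lemma IsTriviallyPerfect.closedNbhd_nested (hH : IsTriviallyPerfect H)
    (hxy : y ∈ closedNbhd H x) :
    closedNbhd H x ⊆ closedNbhd H y ∨ closedNbhd H y ⊆ closedNbhd H x := by
  rcases hxy with rfl | hxy
  exacts [Or.inl subset_rfl, isTriviallyPerfect_iff_closedNbhd_nested.1 hH hxy]

def confine (H : SimpleGraph V) (u v : V) : SimpleGraph V where
  Adj x y := H.Adj x y ∧ (x = u → y ∈ closedNbhd H v) ∧ (y = u → x ∈ closedNbhd H v)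
  symm := ⟨fun _ _ h => ⟨h.1.symm, h.2.2, h.2.1⟩⟩
  loopless := ⟨fun x h => H.loopless.irrefl x h.1⟩

lemma confine_le : confine H u v ≤ H := fun _ _ h => h.1

lemma le_confine {G : SimpleGraph V} (hGH : G ≤ H) (hu : closedNbhd G u ⊆ closedNbhd H v) :
    G ≤ confine H u v := fun _ _ hxy =>
  ⟨hGH hxy, fun hx => hu (Or.inr (hx ▸ hxy)), fun hy => hu (Or.inr (hy ▸ hxy.symm))⟩

lemma mem_closedNbhd_confine_self :
    z ∈ closedNbhd (confine H u v) u ↔ z = u ∨ (H.Adj u z ∧ z ∈ closedNbhd H v) := by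
  refine or_congr_right ⟨fun h => ⟨h.1, h.2.1 rfl⟩, fun h => ⟨h.1, fun _ => h.2, ?_⟩⟩
  rintro rfl
  exact absurd h.1 (H.loopless.irrefl z)

lemma mem_closedNbhd_confine_of_ne (hw : w ≠ u) :
    z ∈ closedNbhd (confine H u v) w ↔ z ∈ closedNbhd H w ∧ (z = u → w ∈ closedNbhd H v) := by
  simp only [mem_closedNbhd, confine]
  grind

lemma closedNbhd_confine_subset_of_ne (hx : x ≠ u) (hy : y ≠ u)
    (hxy : closedNbhd H x ⊆ closedNbhd H y) :
    closedNbhd (confine H u v) x ⊆ closedNbhd (confine H u v) y := by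
  intro z hz
  rw [mem_closedNbhd_confine_of_ne hx] at hz
  rw [mem_closedNbhd_confine_of_ne hy]
  refine ⟨hxy hz.1, ?_⟩
  rintro rfl
  exact mem_closedNbhd_comm.1 (hxy (mem_closedNbhd_comm.1 (hz.2 rfl)))

lemma IsTriviallyPerfect.confine_closedNbhd_nested_self (hH : IsTriviallyPerfect H)
    (huy : H.Adj u y) (hy : y ∈ closedNbhd H v) :
    closedNbhd (confine H u v) u ⊆ closedNbhd (confine H u v) y ∨
      closedNbhd (confine H u v) y ⊆ closedNbhd (confine H u v) u := by
  have hy_eq : closedNbhd (confine H u v) y = closedNbhd H y := by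
    ext z
    rw [mem_closedNbhd_confine_of_ne huy.ne']
    exact and_iff_left_of_imp fun _ _ => hy
  rw [hy_eq]
  rcases hH.closedNbhd_nested (Or.inr huy) with hsub | hsub
  · exact Or.inl fun z hz => hsub (mem_closedNbhd_confine_self.1 hz |>.elim
      (fun h => h ▸ Or.inl rfl) fun h => Or.inr h.1)
  rcases hH.closedNbhd_nested hy with hvy | hyv
  · refine Or.inl fun z hz => ?_
    rcases mem_closedNbhd_confine_self.1 hz with rfl | ⟨-, hzv⟩
    exacts [Or.inr huy.symm, hvy hzv]
  · refine Or.inr fun z hz => mem_closedNbhd_confine_self.2 ?_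
    rcases hsub hz with rfl | hz'
    exacts [Or.inl rfl, Or.inr ⟨hz', hyv hz⟩]

lemma IsTriviallyPerfect.confine (hH : IsTriviallyPerfect H) (u v : V) :
    IsTriviallyPerfect (confine H u v) := by
  rw [isTriviallyPerfect_iff_closedNbhd_nested]
  intro x y hxy
  by_cases hx : x = u
  · subst hx
    exact hH.confine_closedNbhd_nested_self hxy.1 (hxy.2.1 rfl)
  by_cases hy : y = u
  · subst hy
    exact (hH.confine_closedNbhd_nested_self hxy.1.symm (hxy.2.2 rfl)).symm
  exact (hH.closedNbhd_nested (Or.inr hxy.1)).imp (closedNbhd_confine_subset_of_ne hx hy)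
    (closedNbhd_confine_subset_of_ne hy hx)

end

theorem stmt8 {V : Type*} (G Gh : SimpleGraph V)
    (hmin : IsMinimalTPCompletion G Gh) (u v : V)
    (huv : closedNbhd G u ⊆ closedNbhd G v) :
    closedNbhd Gh u ⊆ closedNbhd Gh v := by
  obtain ⟨⟨hle, hTP⟩, hminimal⟩ := hmin
  have hGv : closedNbhd G u ⊆ closedNbhd Gh v := huv.trans (closedNbhd_mono hle v)
  have hconfine : confine Gh u v = Gh :=
    hminimal _ (le_confine hle hGv) confine_le (hTP.confine u v)
  intro z hz
  rw [← hconfine, mem_closedNbhd_confine_self] at hz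
  rcases hz with rfl | ⟨-, hz⟩
  exacts [hGv (Or.inl rfl), hz]
end

section
/- Let H be a connected simple graph, let Ĥ be a minimum trivially perfect completion of H, and let u be a universal vertex of Ĥ. Then Ĥ − u is a minimum trivially perfect completion of H − u. -/
open scoped Classical

/-!
Given any trivially perfect completion `G'` of `H - u`, put `u` back as a universal vertex.
The result is still trivially perfect, since a universal vertex lies on no induced `P₄` or `C₄`,
so it is a completion of `H`. Its fill edges at `u` are exactly those of `Ĥ` (all non-edges of `H`
at `u`), and away from `u` they are the fill edges of `G'`. Minimality of `Ĥ` therefore bounds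
the fill of `Ĥ - u` by that of `G'`.
-/

open SimpleGraph

section TriviallyPerfect

variable {V W : Type*} {G : SimpleGraph V} {G' : SimpleGraph W}

theorem p4At_map_iff (f : G ↪g G') {a b c d : V} :
    P4At G' (f a) (f b) (f c) (f d) ↔ P4At G a b c d := by
  simp only [P4At, f.map_adj_iff, f.injective.ne_iff]

theorem c4At_map_iff (f : G ↪g G') {a b c d : V} :
    C4At G' (f a) (f b) (f c) (f d) ↔ C4At G a b c d := by
  simp only [C4At, f.map_adj_iff, f.injective.ne_iff]

theorem IsTriviallyPerfect.comap (f : G ↪g G') (h : IsTriviallyPerfect G') :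
    IsTriviallyPerfect G :=
  ⟨fun ⟨a, b, c, d, hp⟩ => h.1 ⟨f a, f b, f c, f d, (p4At_map_iff f).2 hp⟩,
    fun ⟨a, b, c, d, hc⟩ => h.2 ⟨f a, f b, f c, f d, (c4At_map_iff f).2 hc⟩⟩

theorem IsTriviallyPerfect.induce (h : IsTriviallyPerfect G) (s : Set V) :
    IsTriviallyPerfect (G.induce s) :=
  h.comap (Embedding.induce s)

/-- Every vertex of an induced `P₄` or `C₄` has a non-neighbour in it, so a universal vertex
lies in none of them. -/
theorem IsTriviallyPerfect.of_induce_of_adj {u : V} (hu : ∀ w, w ≠ u → G.Adj u w)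
    (h : IsTriviallyPerfect (G.induce {w | w ≠ u})) : IsTriviallyPerfect G := by
  have ne_of_not_adj {x y : V} (hxy : x ≠ y) (hn : ¬G.Adj x y) : x ≠ u := by
    rintro rfl
    exact hn (hu y hxy.symm)
  constructor
  · rintro ⟨a, b, c, d, hp⟩
    have ⟨_, hac, had, _, hbd, _, _, _, _, nac, nbd, nad⟩ := hp
    exact h.1 ⟨⟨a, ne_of_not_adj hac nac⟩, ⟨b, ne_of_not_adj hbd nbd⟩,
      ⟨c, ne_of_not_adj hac.symm fun hca => nac hca.symm⟩,
      ⟨d, ne_of_not_adj had.symm fun hda => nad hda.symm⟩,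
      (p4At_map_iff (Embedding.induce _)).1 hp⟩
  · rintro ⟨a, b, c, d, hc⟩
    have ⟨_, hac, _, _, hbd, _, _, _, _, _, nac, nbd⟩ := hc
    exact h.2 ⟨⟨a, ne_of_not_adj hac nac⟩, ⟨b, ne_of_not_adj hbd nbd⟩,
      ⟨c, ne_of_not_adj hac.symm fun hca => nac hca.symm⟩,
      ⟨d, ne_of_not_adj hbd.symm fun hdb => nbd hdb.symm⟩,
      (c4At_map_iff (Embedding.induce _)).1 hc⟩

end TriviallyPerfect

namespace SimpleGraph

variable {V : Type*}

section EdgeCount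

variable [Fintype V]

theorem ncard_edgeSet_eq_ncard_incidenceSet_add (G : SimpleGraph V) (u : V) :
    G.edgeSet.ncard = (G.incidenceSet u).ncard + (G.induce {w | w ≠ u}).edgeSet.ncard := by
  rw [← Set.ncard_sdiff_add_ncard_of_subset (G.incidenceSet_subset u), add_comm,
    ← edgeSet_deleteIncidenceSet, ← Set.compl_singleton_eq, ← coe_edgeFinset, ← coe_edgeFinset,
    Set.ncard_coe_finset, Set.ncard_coe_finset, card_edgeFinset_induce_compl_singleton]

theorem ncard_edgeSet_sdiff_eq_ncard_incidenceSet_add (H K : SimpleGraph V) (u : V) :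
    (K.edgeSet \ H.edgeSet).ncard = ((K \ H).incidenceSet u).ncard +
      ((K.induce {w | w ≠ u}).edgeSet \ (H.induce {w | w ≠ u}).edgeSet).ncard := by
  rw [← edgeSet_sdiff, ← edgeSet_sdiff, ncard_edgeSet_eq_ncard_incidenceSet_add _ u]
  rfl

end EdgeCount

theorem incidenceSet_sdiff_congr {H K K' : SimpleGraph V} {u : V}
    (h : ∀ w, K.Adj u w ↔ K'.Adj u w) : (K \ H).incidenceSet u = (K' \ H).incidenceSet u := by
  ext e
  induction e using Sym2.ind with
  | _ a b =>
    simp only [mk'_mem_incidenceSet_iff, sdiff_adj]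
    rcases eq_or_ne u a with rfl | hua
    · simp [h]
    rcases eq_or_ne u b with rfl | hub
    · simp [adj_comm _ a u, h]
    simp [hua, hub]

def withUniversal (u : V) (G : SimpleGraph {w : V | w ≠ u}) : SimpleGraph V :=
  G.map (Function.Embedding.subtype _) ⊔ fromRel fun x _ => x = u

variable {u : V} {G : SimpleGraph {w : V | w ≠ u}}

theorem withUniversal_adj_left {w : V} (hw : w ≠ u) : (withUniversal u G).Adj u w :=
  Or.inr ⟨hw.symm, Or.inl rfl⟩

theorem induce_withUniversal : (withUniversal u G).induce {w | w ≠ u} = G := by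
  ext ⟨x, hx⟩ ⟨y, hy⟩
  change (G.map (Function.Embedding.subtype _)).Adj (Function.Embedding.subtype _ ⟨x, hx⟩)
    (Function.Embedding.subtype _ ⟨y, hy⟩) ∨ _ ↔ _
  rw [map_adj_apply, fromRel_adj, or_iff_left]
  exact fun h => h.2.elim hx hy

theorem le_withUniversal {H : SimpleGraph V} (h : H.induce {w | w ≠ u} ≤ G) :
    H ≤ withUniversal u G := by
  intro x y hxy
  by_cases hx : x = u
  · exact Or.inr ⟨hxy.ne, Or.inl hx⟩
  by_cases hy : y = u
  · exact Or.inr ⟨hxy.ne, Or.inr hy⟩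
  exact Or.inl (map_adj_apply.2 (h (v := ⟨x, hx⟩) (w := ⟨y, hy⟩) hxy))

end SimpleGraph

theorem stmt11_general {V : Type*} [Fintype V] (H Hh : SimpleGraph V)
    (hmin : IsMinTPCompletion H Hh) (u : V)
    (huniv : ∀ w : V, w ≠ u → Hh.Adj u w) :
    IsMinTPCompletion (H.induce {w : V | w ≠ u}) (Hh.induce {w : V | w ≠ u}) := by
  obtain ⟨⟨hle, htp⟩, hcost⟩ := hmin
  refine ⟨⟨fun _ _ h => hle h, htp.induce _⟩, fun G' ⟨hG'le, hG'tp⟩ => ?_⟩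
  have hcone : IsTPCompletion H (withUniversal u G') :=
    ⟨le_withUniversal hG'le,
      .of_induce_of_adj (fun _ => withUniversal_adj_left) (induce_withUniversal ▸ hG'tp)⟩
  have hsame_at_u : ∀ w, Hh.Adj u w ↔ (withUniversal u G').Adj u w :=
    fun w => ⟨fun h => withUniversal_adj_left h.ne', fun h => huniv w h.ne'⟩
  have hle_cost := hcost _ hcone
  rw [ncard_edgeSet_sdiff_eq_ncard_incidenceSet_add H _ u,
    ncard_edgeSet_sdiff_eq_ncard_incidenceSet_add H _ u, incidenceSet_sdiff_congr hsame_at_u,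
    induce_withUniversal] at hle_cost
  omega

theorem stmt11 {V : Type*} [Fintype V] (H Hh : SimpleGraph V)
    (hconn : H.Connected)
    (hmin : IsMinTPCompletion H Hh) (u : V)
    (huniv : ∀ w : V, w ≠ u → Hh.Adj u w) :
    IsMinTPCompletion (H.induce {w : V | w ≠ u}) (Hh.induce {w : V | w ≠ u}) :=
  stmt11_general H Hh hmin u huniv
end

section
/- A pseudo-split graph contains at most one induced C₅, and for any graph G: opt(G) ≤ sed(G) ≤ opt(G) + 2, where opt(G) is the minimum number of edge deletions to make G pseudo-split and sed(G) is the minimum number to make G split. -/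
open scoped Classical

/-!
Every vertex outside an induced `C₅` of a pseudo-split graph is complete or anticomplete to it,
since otherwise a `2K₂` or a `C₄` appears. Two distinct induced `C₅`s are therefore impossible:
a vertex of the second one outside the first would, together with two of its neighbours or
non-neighbours on the second cycle, again produce a `2K₂` or a `C₄`. The same dichotomy shows that
deleting the edges `ab` and `bc` of an induced `C₅ = abcde` leaves a split graph with clique
`N[d] ∩ N[e]`, while a pseudo-split graph without `C₅` is already split (Földes–Hammer): a
clique `K` maximising `∑ v ∈ K, (deg v + 1)` can neither absorb an outside vertex nor gain by
exchanging one of its vertices for an outside one, and then an edge `xy` outside `K` yields an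
induced `2K₂`, `C₄` or `C₅`.
-/

section

open Finset

variable {V : Type*} {H : SimpleGraph V} {a b c d e : V}

lemma IsPseudoSplit.false_of_twoK2 (hH : IsPseudoSplit H) (hab : H.Adj a b) (hcd : H.Adj c d)
    (hac : ¬H.Adj a c) (had : ¬H.Adj a d) (hbc : ¬H.Adj b c) (hbd : ¬H.Adj b d) : False :=
  hH.1 ⟨a, b, c, d, hab.ne, by rintro rfl; exact had hcd, by rintro rfl; exact hac hcd.symm,
    by rintro rfl; exact hac hab, by rintro rfl; exact had hab, hcd.ne,
    hab, hcd, hac, had, hbc, hbd⟩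

lemma IsPseudoSplit.false_of_c4 (hH : IsPseudoSplit H) (hne_ac : a ≠ c) (hne_bd : b ≠ d)
    (hab : H.Adj a b) (hbc : H.Adj b c) (hcd : H.Adj c d) (hda : H.Adj d a)
    (hac : ¬H.Adj a c) (hbd : ¬H.Adj b d) : False :=
  hH.2 ⟨a, b, c, d, hab.ne, hne_ac, hda.ne.symm, hbc.ne, hne_bd, hcd.ne,
    hab, hbc, hcd, hda, hac, hbd⟩

lemma c5At_of_adj (hab : H.Adj a b) (hbc : H.Adj b c) (hcd : H.Adj c d) (hde : H.Adj d e)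
    (hea : H.Adj e a) (hac : ¬H.Adj a c) (had : ¬H.Adj a d) (hbd : ¬H.Adj b d)
    (hbe : ¬H.Adj b e) (hce : ¬H.Adj c e) : C5At H a b c d e :=
  ⟨hab.ne, by rintro rfl; exact had hcd, by rintro rfl; exact hac hcd.symm, hea.ne.symm, hbc.ne,
    by rintro rfl; exact hbe hde, by rintro rfl; exact hce hbc.symm, hcd.ne,
    by rintro rfl; exact hbe hbc, hde.ne, hab, hbc, hcd, hde, hea, hac, had, hbd, hbe, hce⟩

lemma C5At.rotate (h : C5At H a b c d e) : C5At H b c d e a := by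
  obtain ⟨-, -, -, -, -, -, -, -, -, -, hab, hbc, hcd, hde, hea, hac, had, hbd, hbe, hce⟩ := h
  exact c5At_of_adj hbc hcd hde hea hab hbd hbe hce (fun h => hac h.symm) fun h => had h.symm

lemma IsSplit.isPseudoSplit (h : IsSplit H) : IsPseudoSplit H := by
  obtain ⟨C, hC, hI⟩ := h
  have mem_of_adj : ∀ ⦃u v⦄, H.Adj u v → u ∈ C ∨ v ∈ C := fun u v huv => by
    by_contra! h
    exact hI h.1 h.2 huv.ne huv
  have not_mem_of_not_adj : ∀ ⦃u v⦄, u ≠ v → ¬H.Adj u v → u ∉ C ∨ v ∉ C := fun u v hne huv => by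
    by_contra! h
    exact huv (hC h.1 h.2 hne)
  constructor
  · rintro ⟨a, b, c, d, -, hac, had, hbc, hbd, -, hab, hcd, nac, nad, nbc, nbd⟩
    rcases mem_of_adj hab with ha | hb <;> rcases mem_of_adj hcd with hc | hd
    exacts [nac (hC ha hc hac), nad (hC ha hd had), nbc (hC hb hc hbc), nbd (hC hb hd hbd)]
  · rintro ⟨a, b, c, d, hab, hac, had, hbc, hbd, hcd, Aab, Abc, Acd, Ada, nac, nbd⟩
    rcases not_mem_of_not_adj hac nac with ha | hc <;>
      rcases not_mem_of_not_adj hbd nbd with hb | hd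
    exacts [hI ha hb hab Aab, hI ha hd had Ada.symm, hI hc hb hbc.symm Abc.symm, hI hc hd hcd Acd]

lemma isSplit_bot : IsSplit (⊥ : SimpleGraph V) :=
  ⟨∅, by simp, fun _ _ _ _ _ h => h⟩

section C5

variable (hH : IsPseudoSplit H) (hC : C5At H a b c d e)
include hH hC

lemma IsPseudoSplit.adj_of_adj_of_C5At {v : V} (hvb : v ≠ b) (hve : v ≠ e) (hv : H.Adj v a) :
    H.Adj v b := by
  obtain ⟨-, hac, had, -, -, -, -, -, -, -, hab, hbc, hcd, hde, hea, nac, nad, -, nbe, nce⟩ := hC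
  by_contra nvb
  by_cases hvc' : H.Adj v c
  · exact hH.false_of_c4 hvb hac hv hab hbc hvc'.symm nvb nac
  by_cases hvd' : H.Adj v d
  · by_cases hve' : H.Adj v e
    · exact hH.false_of_twoK2 hve' hbc nvb hvc' (fun h => nbe h.symm) fun h => nce h.symm
    · exact hH.false_of_c4 hve had.symm hvd' hde hea hv.symm hve' fun h => nad h.symm
  · exact hH.false_of_twoK2 hv hcd hvc' hvd' nac nad

lemma IsPseudoSplit.adj_iff_adj_of_C5At {v x : V} (hv : v ∉ ({a, b, c, d, e} : Set V))
    (hx : x ∈ ({a, b, c, d, e} : Set V)) : H.Adj v x ↔ H.Adj v a := by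
  simp only [Set.mem_insert_iff, Set.mem_singleton_iff, not_or] at hv hx
  obtain ⟨hva, hvb, hvc, hvd, hve⟩ := hv
  have hab := hH.adj_of_adj_of_C5At hC hvb hve
  have hbc := hH.adj_of_adj_of_C5At hC.rotate hvc hva
  have hcd := hH.adj_of_adj_of_C5At hC.rotate.rotate hvd hvb
  have hde := hH.adj_of_adj_of_C5At hC.rotate.rotate.rotate hve hvc
  have hea := hH.adj_of_adj_of_C5At hC.rotate.rotate.rotate.rotate hva hvd
  rcases hx with rfl | rfl | rfl | rfl | rfl <;> tauto

lemma IsPseudoSplit.mem_of_C5At {a' b' c' d' e' : V} (hC' : C5At H a' b' c' d' e') :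
    a' ∈ ({a, b, c, d, e} : Set V) := by
  set S : Set V := {a, b, c, d, e}
  have hS : ∀ v ∉ S, ∀ x ∈ S, H.Adj v x ↔ H.Adj v a := fun v hv x hx =>
    hH.adj_iff_adj_of_C5At hC hv hx
  have hb : b ∈ S := by simp [S]
  have hc : c ∈ S := by simp [S]
  by_contra ha'
  have ⟨_, hac, _, _, _, _, _, _, _, _, hab, _, _, _, _, nac, _⟩ := hC
  obtain ⟨-, hac', had', -, -, -, hbe', -, -, -, hab', -, hcd', -, hea', nac', nad', -, nbe', -⟩ :=
    hC'
  by_cases ha'a : H.Adj a' a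
  · have hout : ∀ v, ¬H.Adj a' v → v ∉ S := fun v hv hvS => hv ((hS a' ha' v hvS).mpr ha'a)
    have ha'c : H.Adj c a' := ((hS a' ha' c hc).mpr ha'a).symm
    have hc'a : ¬H.Adj c' a := fun h => hH.false_of_c4 hac' hac ha'a h.symm
      ((hS c' (hout c' nac') c hc).mpr h) ha'c nac' nac
    have hd'a : ¬H.Adj d' a := fun h => hH.false_of_c4 had' hac ha'a h.symm
      ((hS d' (hout d' nad') c hc).mpr h) ha'c nad' nac
    exact hH.false_of_twoK2 hcd' hab hc'a (mt (hS c' (hout c' nac') b hb).mp hc'a) hd'a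
      (mt (hS d' (hout d' nad') b hb).mp hd'a)
  · have hout : ∀ v, H.Adj a' v → v ∉ S := fun v hv hvS => ha'a ((hS a' ha' v hvS).mp hv)
    have ha'b : ¬H.Adj a' b := mt (hS a' ha' b hb).mp ha'a
    have hb'a : ¬H.Adj b' a := fun h => by
      by_cases he'a : H.Adj e' a
      · exact hH.false_of_c4 hbe' (by rintro rfl; simp [S] at ha') hab'.symm hea'.symm he'a
          h.symm nbe' ha'a
      · exact hH.false_of_twoK2 hea'.symm hab ha'a ha'b he'a
          (mt (hS e' (hout e' hea'.symm) b hb).mp he'a)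
    exact hH.false_of_twoK2 hab' hab ha'a ha'b hb'a (mt (hS b' (hout b' hab') b hb).mp hb'a)

lemma IsPseudoSplit.subset_of_C5At {a' b' c' d' e' : V} (hC' : C5At H a' b' c' d' e') :
    ({a', b', c', d', e'} : Set V) ⊆ {a, b, c, d, e} := by
  rintro v (rfl | rfl | rfl | rfl | rfl)
  exacts [hH.mem_of_C5At hC hC', hH.mem_of_C5At hC hC'.rotate,
    hH.mem_of_C5At hC hC'.rotate.rotate, hH.mem_of_C5At hC hC'.rotate.rotate.rotate,
    hH.mem_of_C5At hC hC'.rotate.rotate.rotate.rotate]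

lemma IsPseudoSplit.eq_of_C5At {a' b' c' d' e' : V} (hC' : C5At H a' b' c' d' e') :
    ({a, b, c, d, e} : Set V) = {a', b', c', d', e'} :=
  (hH.subset_of_C5At hC' hC).antisymm (hH.subset_of_C5At hC hC')

lemma IsPseudoSplit.adj_of_mem_closedNbhd_inter {v : V}
    (hv : v ∈ closedNbhd H d ∩ closedNbhd H e) (hvd : v ≠ d) (hve : v ≠ e) :
    H.Adj v a ∧ H.Adj v c := by
  have ⟨_, _, _, _, _, _, _, _, _, _, _, _, _, _, _, _, nad, nbd, _, nce⟩ := hC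
  obtain ⟨hdv | hdv, hev | hev⟩ := hv <;> try contradiction
  have hvS : v ∉ ({a, b, c, d, e} : Set V) := by
    rintro (rfl | rfl | rfl | rfl | rfl)
    exacts [nad hdv.symm, nbd hdv.symm, nce hev.symm, hvd rfl, hve rfl]
  have hva := (hH.adj_iff_adj_of_C5At hC hvS (by simp)).mp hdv.symm
  exact ⟨hva, (hH.adj_iff_adj_of_C5At hC hvS (by simp)).mpr hva⟩

lemma IsPseudoSplit.isClique_closedNbhd_inter :
    H.IsClique (closedNbhd H d ∩ closedNbhd H e) := by
  intro u hu v hv huv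
  rcases eq_or_ne u d with rfl | hud
  · exact hv.1.resolve_left huv.symm
  rcases eq_or_ne u e with rfl | hue
  · exact hv.2.resolve_left huv.symm
  rcases eq_or_ne v d with rfl | hvd
  · exact (hu.1.resolve_left hud).symm
  rcases eq_or_ne v e with rfl | hve
  · exact (hu.2.resolve_left hue).symm
  obtain ⟨hua, huc⟩ := hH.adj_of_mem_closedNbhd_inter hC hu hud hue
  obtain ⟨hva, hvc⟩ := hH.adj_of_mem_closedNbhd_inter hC hv hvd hve
  have ⟨_, hac, _, _, _, _, _, _, _, _, _, _, _, _, _, nac, _⟩ := hC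
  by_contra huv'
  exact hH.false_of_c4 huv hac hua hva.symm hvc huc.symm huv' nac

lemma IsPseudoSplit.eq_or_forall_not_adj_of_notMem_closedNbhd_inter {v : V}
    (hv : v ∉ closedNbhd H d ∩ closedNbhd H e) :
    v = a ∨ v = b ∨ v = c ∨ ∀ x ∈ ({a, b, c, d, e} : Set V), ¬H.Adj v x := by
  have ⟨_, _, _, _, _, _, _, _, _, _, _, _, _, hde, _⟩ := hC
  by_cases hvS : v ∈ ({a, b, c, d, e} : Set V)
  · rcases hvS with rfl | rfl | rfl | rfl | rfl
    exacts [Or.inl rfl, Or.inr (Or.inl rfl), Or.inr (Or.inr (Or.inl rfl)),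
      (hv ⟨Or.inl rfl, Or.inr hde.symm⟩).elim, (hv ⟨Or.inr hde, Or.inl rfl⟩).elim]
  · refine Or.inr (Or.inr (Or.inr fun x hx hvx => hv ?_))
    have hva := (hH.adj_iff_adj_of_C5At hC hvS hx).mp hvx
    exact ⟨Or.inr ((hH.adj_iff_adj_of_C5At hC hvS (by simp)).mpr hva).symm,
      Or.inr ((hH.adj_iff_adj_of_C5At hC hvS (by simp)).mpr hva).symm⟩

lemma IsPseudoSplit.isSplit_deleteEdges_of_C5At :
    IsSplit (H.deleteEdges {s(a, b), s(b, c)}) := by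
  have ⟨_, _, _, _, _, hbd, _, _, _, _, _, _, _, hde, _, nac, _, nbd, _⟩ := hC
  refine ⟨closedNbhd H d ∩ closedNbhd H e, fun u hu v hv huv => ?_,
    fun u hu v hv huv hadj' => ?_⟩
  · have hb : ∀ w ∈ closedNbhd H d ∩ closedNbhd H e, w ≠ b := by
      rintro w ⟨rfl | hw, -⟩ rfl
      exacts [hbd rfl, nbd hw.symm]
    refine (SimpleGraph.deleteEdges_adj ..).mpr ⟨hH.isClique_closedNbhd_inter hC hu hv huv, ?_⟩
    simp only [Set.mem_insert_iff, Set.mem_singleton_iff, Sym2.eq_iff]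
    have := hb u hu
    have := hb v hv
    tauto
  · obtain ⟨hadj, hnot⟩ := (SimpleGraph.deleteEdges_adj ..).mp hadj'
    clear hadj'
    have hSa : a ∈ ({a, b, c, d, e} : Set V) := by simp
    have hSb : b ∈ ({a, b, c, d, e} : Set V) := by simp
    have hSc : c ∈ ({a, b, c, d, e} : Set V) := by simp
    have hSd : d ∈ ({a, b, c, d, e} : Set V) := by simp
    have hSe : e ∈ ({a, b, c, d, e} : Set V) := by simp
    rcases hH.eq_or_forall_not_adj_of_notMem_closedNbhd_inter hC hu with rfl | rfl | rfl | hu' <;>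
      rcases hH.eq_or_forall_not_adj_of_notMem_closedNbhd_inter hC hv with rfl | rfl | rfl | hv'
    all_goals first
      | exact huv rfl
      | exact nac hadj
      | exact nac hadj.symm
      | exact hv' _ hSa hadj.symm
      | exact hv' _ hSb hadj.symm
      | exact hv' _ hSc hadj.symm
      | exact hu' _ hSa hadj
      | exact hu' _ hSb hadj
      | exact hu' _ hSc hadj
      | exact hH.false_of_twoK2 hadj hde (hu' d hSd) (hu' e hSe) (hv' d hSd) (hv' e hSe)
      | simp [Sym2.eq_swap] at hnot

end C5

section FoldesHammer

variable [Fintype V] {K : Finset V} {x y : V} (hK : H.IsClique (K : Set V))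
  (hKmax : ∀ K' : Finset V, H.IsClique (K' : Set V) →
    ∑ v ∈ K', (H.degree v + 1) ≤ ∑ v ∈ K, (H.degree v + 1))
include hK hKmax

lemma exists_not_adj_of_forall_isClique_sum_le (hx : x ∉ K) : ∃ u ∈ K, ¬H.Adj x u := by
  by_contra! h
  have := hKmax (insert x K) (by simpa using hK.insert fun v hv _ => h v hv)
  rw [sum_insert hx] at this
  omega

lemma degree_le_of_forall_isClique_sum_le {u : V} (hu : u ∈ K) (hx : x ∉ K)
    (hxK : ∀ w ∈ K, w ≠ u → H.Adj x w) : H.degree x ≤ H.degree u := by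
  have hx' : x ∉ K.erase u := fun h => hx (mem_of_mem_erase h)
  have := hKmax (insert x (K.erase u)) <| by
    simpa using (hK.subset (by simp)).insert fun w hw _ =>
      hxK w (mem_of_mem_erase hw) (ne_of_mem_erase hw)
  rw [sum_insert hx', ← add_sum_erase K _ hu] at this
  omega

lemma IsPseudoSplit.false_of_forall_isClique_sum_le (hH : IsPseudoSplit H)
    (h5 : ¬∃ a b c d e, C5At H a b c d e) (hx : x ∉ K) (hy : y ∉ K) (hxy : H.Adj x y)
    (hsub : ∀ u ∈ K, ¬H.Adj x u → ¬H.Adj y u) : False := by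
  obtain ⟨u, huK, hxu⟩ := exists_not_adj_of_forall_isClique_sum_le hK hKmax hx
  have hyu := hsub u huK hxu
  have hxK : ∀ w ∈ K, w ≠ u → H.Adj x w := fun w hw hwu => by
    by_contra hxw
    exact hH.false_of_twoK2 (hK huK hw hwu.symm) hxy (fun h => hxu h.symm) (fun h => hyu h.symm)
      (fun h => hxw h.symm) fun h => hsub w hw hxw h.symm
  -- `deg x ≤ deg u`, while `y` is a neighbour of `x` but not of `u`
  obtain ⟨z, hzu, hzx⟩ : ∃ z, H.Adj u z ∧ ¬H.Adj x z := by
    have hdeg := degree_le_of_forall_isClique_sum_le hK hKmax huK hx hxK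
    have hlt : ((H.neighborFinset x).erase y).card < (H.neighborFinset u).card :=
      (card_erase_lt_of_mem (by simpa using hxy)).trans_le (by simpa using hdeg)
    obtain ⟨z, hz, hz'⟩ := exists_mem_notMem_of_card_lt_card hlt
    simp only [SimpleGraph.mem_neighborFinset, mem_erase, not_and] at hz hz'
    exact ⟨z, hz, hz' (by rintro rfl; exact hyu hz.symm)⟩
  have hzK : z ∉ K := fun hz => hzx (hxK z hz hzu.ne.symm)
  have hyz : H.Adj y z := by
    by_contra hyz
    exact hH.false_of_twoK2 hzu.symm hxy (fun h => hzx h.symm) (fun h => hyz h.symm)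
      (fun h => hxu h.symm) fun h => hyu h.symm
  obtain ⟨w, hwK, hzw⟩ := exists_not_adj_of_forall_isClique_sum_le hK hKmax hzK
  have hwu : w ≠ u := by rintro rfl; exact hzw hzu.symm
  by_cases hyw : H.Adj y w
  · exact hH.false_of_c4 (by rintro rfl; exact hzK hwK) (by rintro rfl; exact hxu hxy)
      hyw.symm hyz hzu.symm (hK huK hwK hwu.symm) (fun h => hzw h.symm) fun h => hyu h
  · exact h5 ⟨w, x, y, z, u, c5At_of_adj (hxK w hwK hwu).symm hxy hyz hzu.symm
      (hK huK hwK hwu.symm) (fun h => hyw h.symm) (fun h => hzw h.symm) hzx hxu hyu⟩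

end FoldesHammer

theorem IsPseudoSplit.isSplit [Finite V] (hH : IsPseudoSplit H)
    (h5 : ¬∃ a b c d e, C5At H a b c d e) : IsSplit H := by
  cases nonempty_fintype V
  obtain ⟨K, hK, hKmax⟩ := (univ.filter fun K : Finset V => H.IsClique (K : Set V)).exists_max_image
    (fun K => ∑ v ∈ K, (H.degree v + 1)) ⟨∅, by simp⟩
  simp only [mem_filter, mem_univ, true_and] at hK hKmax
  refine ⟨K, hK, fun x hx y hy _ hxy => ?_⟩
  by_cases hsub : ∀ u ∈ K, ¬H.Adj x u → ¬H.Adj y u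
  · exact hH.false_of_forall_isClique_sum_le hK hKmax h5 hx hy hxy hsub
  · push Not at hsub
    obtain ⟨u, hu, hxu, hyu⟩ := hsub
    refine hH.false_of_forall_isClique_sum_le hK hKmax h5 hy hx hxy.symm fun w hw hyw hxw => ?_
    exact hH.false_of_c4 (by rintro rfl; exact hx hu) (by rintro rfl; exact hy hw)
      hyu.symm hxy.symm hxw (hK hw hu (by rintro rfl; exact hyw hyu)) (fun h => hxu h.symm) hyw

theorem IsPseudoSplit.exists_isSplit_deleteEdges [Finite V] (hH : IsPseudoSplit H) :
    ∃ F ⊆ H.edgeSet, F.ncard ≤ 2 ∧ IsSplit (H.deleteEdges F) := by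
  by_cases h5 : ∃ a b c d e, C5At H a b c d e
  · obtain ⟨a, b, c, d, e, hC⟩ := h5
    have ⟨_, _, _, _, _, _, _, _, _, _, hab, hbc, _⟩ := hC
    refine ⟨{s(a, b), s(b, c)}, ?_, (Set.ncard_insert_le _ _).trans (by simp),
      hH.isSplit_deleteEdges_of_C5At hC⟩
    rintro _ (rfl | rfl)
    exacts [hab, hbc]
  · exact ⟨∅, by simp, by simp, by simpa using hH.isSplit h5⟩

lemma psdNum_le_sedNum (G : SimpleGraph V) : psdNum G ≤ sedNum G := by
  obtain ⟨E, hE, hcard, hsplit⟩ := Nat.sInf_mem (s := {n | ∃ E ⊆ G.edgeSet, E.ncard = n ∧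
    IsSplit (G.deleteEdges E)}) ⟨_, G.edgeSet, subset_rfl, rfl, by simpa using isSplit_bot⟩
  exact Nat.sInf_le ⟨E, hE, hcard, hsplit.isPseudoSplit⟩

lemma sedNum_le_psdNum_add_two [Finite V] (G : SimpleGraph V) : sedNum G ≤ psdNum G + 2 := by
  obtain ⟨E, hE, hcard, hps⟩ := Nat.sInf_mem (s := {n | ∃ E ⊆ G.edgeSet, E.ncard = n ∧
    IsPseudoSplit (G.deleteEdges E)}) ⟨_, G.edgeSet, subset_rfl, rfl,
      by simpa using isSplit_bot.isPseudoSplit⟩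
  obtain ⟨F, hF, hF2, hsplit⟩ := hps.exists_isSplit_deleteEdges
  have hFG : F ⊆ G.edgeSet := hF.trans (by simp)
  calc sedNum G ≤ (E ∪ F).ncard :=
        Nat.sInf_le ⟨E ∪ F, Set.union_subset hE hFG, rfl, by
          rwa [← SimpleGraph.deleteEdges_deleteEdges]⟩
    _ ≤ E.ncard + F.ncard := Set.ncard_union_le E F
    _ ≤ psdNum G + 2 := by rw [hcard]; exact Nat.add_le_add_left hF2 _

end

theorem stmt17 {V : Type*} [Fintype V] :
    (∀ H : SimpleGraph V, IsPseudoSplit H →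
      ∀ a b c d e a' b' c' d' e' : V, C5At H a b c d e → C5At H a' b' c' d' e' →
        ({a, b, c, d, e} : Set V) = {a', b', c', d', e'}) ∧
    ∀ G : SimpleGraph V, psdNum G ≤ sedNum G ∧ sedNum G ≤ psdNum G + 2 := by
  exact ⟨fun H hH _ _ _ _ _ _ _ _ _ _ hC hC' => hH.eq_of_C5At hC hC',
    fun G => ⟨psdNum_le_sedNum G, sedNum_le_psdNum_add_two G⟩⟩
end
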